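/- For any real r with 0 ≤ r ≤ 1 and positive integer n, let M be the unique integer satisfying (n+1)r - 1 ≤ M < (n+1)r, and define P(n) = r^M (1-r)^(n-M) · C(n, M). Then P(n+1) ≤ P(n); i.e., the maximal probability of a binomial(n, r) distribution is non-increasing in the number of trials n. -/

import Mathlib

/-! Write `b(n, k) = C(n, k) r^k (1 - r)^(n - k)`. Consecutive masses have ratio
`b(n, k + 1) / b(n, k) = r (n - k) / ((1 - r) (k + 1))`, which is at least `1` exactly when
`k + 1 ≤ (n + 1) r`; so `k ↦ b(n, k)` rises up to the mode `M` and falls after it. By Pascal's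
rule `b(n + 1, k) = r b(n, k - 1) + (1 - r) b(n, k)` is a convex combination of two masses of the
`n`-trial distribution, hence at most the peak `b(n, M)`. -/

def binomialMass {R : Type*} [CommRing R] (n : ℕ) (r : R) (k : ℕ) : R :=
  r ^ k * (1 - r) ^ (n - k) * n.choose k

section CommRing

variable {R : Type*} [CommRing R] (n : ℕ) (r : R)

theorem binomialMass_of_lt {k : ℕ} (hk : n < k) : binomialMass n r k = 0 := by
  simp [binomialMass, Nat.choose_eq_zero_of_lt hk]

theorem binomialMass_succ_zero : binomialMass (n + 1) r 0 = (1 - r) * binomialMass n r 0 := by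
  simp only [binomialMass, Nat.choose_zero_right, Nat.sub_zero]
  ring

theorem binomialMass_succ_succ (k : ℕ) :
    binomialMass (n + 1) r (k + 1) =
      r * binomialMass n r k + (1 - r) * binomialMass n r (k + 1) := by
  rcases lt_or_ge n k with hnk | hkn
  · simp [binomialMass_of_lt, hnk, hnk.trans (Nat.lt_succ_self k)]
  obtain ⟨m, rfl⟩ := Nat.exists_eq_add_of_le hkn
  rcases m with _ | m
  · simp [binomialMass, pow_succ']
  · simp only [binomialMass, Nat.choose_succ_succ', Nat.cast_add]
    rw [show k + (m + 1) + 1 - (k + 1) = m + 1 by omega, show k + (m + 1) - k = m + 1 by omega,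
      show k + (m + 1) - (k + 1) = m by omega]
    ring

/-- The ratio of consecutive masses, written without division. -/
theorem binomialMass_succ_mul (k : ℕ) :
    (1 - r) * (k + 1) * binomialMass n r (k + 1) = r * (n - k) * binomialMass n r k := by
  rcases lt_or_ge k n with hkn | hnk
  · obtain ⟨m, rfl⟩ := Nat.exists_eq_add_of_lt hkn
    have hchoose := congrArg (Nat.cast (R := R)) (Nat.choose_succ_right_eq (k + m + 1) k)
    rw [show k + m + 1 - k = m + 1 by omega] at hchoose
    push_cast at hchoose
    simp only [binomialMass, show k + m + 1 - (k + 1) = m by omega,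
      show k + m + 1 - k = m + 1 by omega]
    push_cast
    linear_combination r ^ (k + 1) * (1 - r) ^ (m + 1) * hchoose
  · rcases hnk.eq_or_lt with rfl | hnk <;> simp [binomialMass_of_lt, *]

end CommRing

section Order

variable {R : Type*} [Field R] [LinearOrder R] [IsStrictOrderedRing R] {n : ℕ} {r : R}

theorem binomialMass_nonneg (hr0 : 0 ≤ r) (hr1 : r ≤ 1) (k : ℕ) :
    0 ≤ binomialMass n r k := by
  have : 0 ≤ 1 - r := sub_nonneg.2 hr1
  unfold binomialMass
  positivity

theorem binomialMass_le_succ (hr0 : 0 ≤ r) (hr1 : r ≤ 1) {k : ℕ} (hkn : k < n)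
    (hk : (k + 1 : R) ≤ (n + 1) * r) : binomialMass n r k ≤ binomialMass n r (k + 1) := by
  have hratio := binomialMass_succ_mul n r k
  have hkn' : (k : R) < n := by exact_mod_cast hkn
  rcases hr1.lt_or_eq with hr1 | rfl
  · have hpos : 0 < (1 - r) * (k + 1) := by have := sub_pos.2 hr1; positivity
    refine le_of_mul_le_mul_left ?_ hpos
    rw [hratio]
    exact mul_le_mul_of_nonneg_right (by linarith) (binomialMass_nonneg hr0 hr1.le k)
  · have : binomialMass n (1 : R) k = 0 := by
      simpa [(sub_pos.2 hkn').ne'] using hratio.symm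
    rw [this]
    exact binomialMass_nonneg zero_le_one le_rfl _

theorem binomialMass_succ_le (hr0 : 0 ≤ r) (hr1 : r ≤ 1) {k : ℕ}
    (hk : (n + 1) * r ≤ k + 1) : binomialMass n r (k + 1) ≤ binomialMass n r k := by
  rcases le_or_gt n k with hnk | hkn
  · exact binomialMass_of_lt n r (Nat.lt_succ_of_le hnk) ▸ binomialMass_nonneg hr0 hr1 k
  have hratio := binomialMass_succ_mul n r k
  have hkn' : (k : R) < n := by exact_mod_cast hkn
  rcases hr0.lt_or_eq with hr0 | rfl
  · have hpos : 0 < r * (n - k) := by have := sub_pos.2 hkn'; positivity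
    refine le_of_mul_le_mul_left ?_ hpos
    rw [← hratio]
    exact mul_le_mul_of_nonneg_right (by linarith) (binomialMass_nonneg hr0.le hr1 _)
  · have : binomialMass n (0 : R) (k + 1) = 0 := by simp [binomialMass]
    rw [this]
    exact binomialMass_nonneg le_rfl zero_le_one k

theorem binomialMass_le_binomialMass_mode (hr0 : 0 ≤ r) (hr1 : r ≤ 1) {M : ℕ}
    (hM1 : (n + 1) * r - 1 ≤ M) (hM2 : (M : R) < (n + 1) * r) (k : ℕ) :
    binomialMass n r k ≤ binomialMass n r M := by
  have hMn : M ≤ n := by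
    have : (M : R) < n + 1 := hM2.trans_le (mul_le_of_le_one_right (by positivity) hr1)
    exact Nat.lt_succ_iff.1 (by exact_mod_cast this)
  rcases le_total k M with hkM | hMk
  · refine monotoneOn_of_le_succ Set.ordConnected_Iic (fun j _ _ hj ↦ ?_)
      hkM Set.self_mem_Iic hkM
    rw [Order.succ_eq_add_one] at hj ⊢
    have hjM : j + 1 ≤ M := hj
    have : (j + 1 : R) ≤ M := by exact_mod_cast hjM
    exact binomialMass_le_succ hr0 hr1 (by omega) (by linarith)
  · refine antitoneOn_of_succ_le Set.ordConnected_Ici (fun j _ hj _ ↦ ?_)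
      Set.self_mem_Ici hMk hMk
    rw [Order.succ_eq_add_one]
    have : (M : R) ≤ j := by exact_mod_cast hj
    exact binomialMass_succ_le hr0 hr1 (by linarith)

theorem binomialMass_succ_le_of_forall_le (hr0 : 0 ≤ r) (hr1 : r ≤ 1) {m : R}
    (hm : ∀ k, binomialMass n r k ≤ m) (k : ℕ) : binomialMass (n + 1) r k ≤ m := by
  cases k with
  | zero =>
    rw [binomialMass_succ_zero]
    exact (mul_le_of_le_one_left (binomialMass_nonneg hr0 hr1 0) (by linarith)).trans (hm 0)
  | succ k =>
    have : 0 ≤ 1 - r := sub_nonneg.2 hr1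
    calc binomialMass (n + 1) r (k + 1)
        = r * binomialMass n r k + (1 - r) * binomialMass n r (k + 1) :=
          binomialMass_succ_succ n r k
      _ ≤ r * m + (1 - r) * m := by gcongr <;> exact hm _
      _ = m := by ring

end Order

theorem binomial_mode_prob_antitone_general
    (r : ℝ) (hr0 : 0 ≤ r) (hr1 : r ≤ 1) (n : ℕ)
    (M M' : ℕ)
    (hM1 : ((n : ℝ) + 1) * r - 1 ≤ M) (hM2 : (M : ℝ) < ((n : ℝ) + 1) * r) :
    r ^ M' * (1 - r) ^ (n + 1 - M') * ((n + 1).choose M')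
      ≤ r ^ M * (1 - r) ^ (n - M) * (n.choose M) :=
  binomialMass_succ_le_of_forall_le hr0 hr1
    (binomialMass_le_binomialMass_mode hr0 hr1 hM1 hM2) M'

/-- The maximal probability (mode mass) of a binomial(n, r) distribution is
non-increasing in the number of trials `n`. -/
theorem binomial_mode_prob_antitone
    (r : ℝ) (hr0 : 0 ≤ r) (hr1 : r ≤ 1) (n : ℕ) (hn : 0 < n)
    (M M' : ℕ)
    (hM1 : ((n : ℝ) + 1) * r - 1 ≤ M) (hM2 : (M : ℝ) < ((n : ℝ) + 1) * r)
    (hM'1 : ((n : ℝ) + 2) * r - 1 ≤ M') (hM'2 : (M' : ℝ) < ((n : ℝ) + 2) * r) :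
    r ^ M' * (1 - r) ^ (n + 1 - M') * ((n + 1).choose M')
      ≤ r ^ M * (1 - r) ^ (n - M) * (n.choose M) :=
  binomial_mode_prob_antitone_general r hr0 hr1 n M M' hM1 hM2
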